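/- Let μ and M be formal Laurent series in p (with coefficients smooth functions of X) of the forms μ = p + Σ_{n≥0} vₙp⁻ⁿ and M = Σ_{n=1}^{N} nTₙμ^{n−1} + Σ_{n≥1} wₙ(T)μ⁻ⁿ (finite number of times Tₙ). Then the canonical Poisson bracket {μ, M} = μ_p M_X − μ_X M_p, computed via the chain rule, equals 1 + (terms with strictly negative powers of p); in particular its p⁰-and-higher part equals 1. -/

import Mathlib

open Filter Real

/-- The (truncated) Lax function `μ = p + Σ_{n=0}^{K} vₙ(X) p⁻ⁿ`. -/
noncomputable def muf (K : ℕ) (v : ℕ → ℝ → ℝ) (X p : ℝ) : ℝ :=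
  p + ∑ n ∈ Finset.range (K + 1), v n X / p ^ n

/-- The (truncated) Orlov function
`M = Σ_{n=1}^{N} nTₙμ^{n−1} + Σ_{n=1}^{K} wₙ(X)μ⁻ⁿ` with `T₁ = X`. -/
noncomputable def Mf (K N : ℕ) (v : ℕ → ℝ → ℝ) (T : ℕ → ℝ) (w : ℕ → ℝ → ℝ)
    (X p : ℝ) : ℝ :=
  X + (∑ n ∈ Finset.Icc 2 N, (n : ℝ) * T n * (muf K v X p) ^ (n - 1)) +
    ∑ n ∈ Finset.Icc 1 K, w n X / (muf K v X p) ^ n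

/-- The canonical bracket `{μ, M} = μ_p M_X − μ_X M_p` equals
`1 + (strictly negative powers of p)`; in particular its `p⁰`-and-higher part
is `1`, i.e. `{μ,M} → 1` as `p → ∞`. -/
theorem canonical_bracket_orlov (K N : ℕ) (v : ℕ → ℝ → ℝ) (T : ℕ → ℝ)
    (w : ℕ → ℝ → ℝ) (hv : ∀ n, ContDiff ℝ (⊤ : ℕ∞) (v n)) (hw : ∀ n, ContDiff ℝ (⊤ : ℕ∞) (w n))
    (X : ℝ) :
    Tendsto (fun p =>
        deriv (fun q => muf K v X q) p * deriv (fun x => Mf K N v T w x p) X -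
          deriv (fun x => muf K v x p) X * deriv (fun q => Mf K N v T w X q) p)
      atTop (nhds 1) := by
  have hvd : ∀ n, Differentiable ℝ (v n) := fun n => (hv n).differentiable (by simp)
  have hwd : ∀ n, Differentiable ℝ (w n) := fun n => (hw n).differentiable (by simp)
  -- μ → ∞
  have hμtop : Tendsto (fun p => muf K v X p) atTop atTop := by
    have hs : Tendsto (fun p : ℝ => ∑ n ∈ Finset.range (K + 1), v n X / p ^ n)
        atTop (nhds (∑ n ∈ Finset.range (K + 1), if n = 0 then v n X else 0)) := by
      apply tendsto_finset_sum
      intro n _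
      rcases Nat.eq_zero_or_pos n with h0 | h1
      · subst h0
        simpa using (tendsto_const_nhds : Tendsto (fun _ : ℝ => v 0 X) atTop _)
      · rw [if_neg (by omega)]
        exact Tendsto.div_atTop tendsto_const_nhds (tendsto_pow_atTop (by omega))
    exact (hs.add_atTop tendsto_id).congr fun p => by simp only [muf, id_eq]; ring
  -- explicit derivatives
  set Dp : ℝ → ℝ := fun p => 1 - ∑ n ∈ Finset.range (K + 1), n * v n X / p ^ (n + 1)
    with hDp
  set DX : ℝ → ℝ := fun p => ∑ n ∈ Finset.range (K + 1), deriv (v n) X / p ^ n with hDX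
  -- limit of the simplified expression
  have hg : Tendsto (fun p => Dp p *
      (1 + ∑ n ∈ Finset.Icc 1 K, deriv (w n) X / (muf K v X p) ^ n)) atTop (nhds 1) := by
    have h1 : Tendsto Dp atTop (nhds 1) := by
      have hs : Tendsto (fun p : ℝ => ∑ n ∈ Finset.range (K + 1), (n : ℝ) * v n X / p ^ (n + 1))
          atTop (nhds 0) := by
        have := tendsto_finset_sum (Finset.range (K + 1))
          (fun n _ => Tendsto.div_atTop
            (tendsto_const_nhds (x := (n : ℝ) * v n X) (f := atTop (α := ℝ)))
            (tendsto_pow_atTop (n := n + 1) (by omega)))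
        simpa using this
      simpa using (tendsto_const_nhds (x := (1:ℝ))).sub hs
    have h2 : Tendsto (fun p => 1 + ∑ n ∈ Finset.Icc 1 K, deriv (w n) X / (muf K v X p) ^ n)
        atTop (nhds 1) := by
      have hs : Tendsto (fun p => ∑ n ∈ Finset.Icc 1 K, deriv (w n) X / (muf K v X p) ^ n)
          atTop (nhds 0) := by
        have := tendsto_finset_sum (Finset.Icc 1 K)
          (fun n hn => Tendsto.div_atTop
            (tendsto_const_nhds (x := deriv (w n) X) (f := atTop (α := ℝ)))
            ((tendsto_pow_atTop (n := n) (by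
              have := Finset.mem_Icc.mp hn; omega)).comp hμtop))
        simpa using this
      simpa using (tendsto_const_nhds (x := (1:ℝ))).add hs
    simpa using h1.mul h2
  refine Tendsto.congr' ?_ hg
  filter_upwards [eventually_ne_atTop (0 : ℝ), hμtop.eventually_ne_atTop 0] with p hp hμp
  have hμ := hμp
  -- derivative of μ in p
  have hA : HasDerivAt (fun q => muf K v X q) (Dp p) p := by
    have hterm : ∀ n : ℕ, HasDerivAt (fun q : ℝ => v n X / q ^ n)
        (-(n * v n X / p ^ (n + 1))) p := by
      intro n
      have h : HasDerivAt (fun q : ℝ => v n X / q ^ n) _ p := (hasDerivAt_const p (v n X)).fun_div (hasDerivAt_pow n p) (pow_ne_zero n hp)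
      convert h using 1
      rcases n with _ | m
      · simp
      · simp only [Nat.add_sub_cancel]
        field_simp
        ring
    have hsum := HasDerivAt.fun_sum (fun n (_ : n ∈ Finset.range (K + 1)) => hterm n)
    have : HasDerivAt (fun q : ℝ => q + ∑ n ∈ Finset.range (K + 1), v n X / q ^ n) _ p :=
      (hasDerivAt_id p).fun_add hsum
    simp only [muf]
    convert this using 1
    simp [hDp, sub_eq_add_neg, Finset.sum_neg_distrib]
  -- derivative of μ in X
  have hB : HasDerivAt (fun x => muf K v x p) (DX p) X := by
    have hsum := HasDerivAt.fun_sum (fun n (_ : n ∈ Finset.range (K + 1)) =>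
      ((hvd n X).hasDerivAt.div_const (p ^ n) :
        HasDerivAt (fun x => v n x / p ^ n) (deriv (v n) X / p ^ n) X))
    have := (hasDerivAt_const X p).fun_add hsum
    simp only [muf]
    simpa [hDX] using this
  -- derivative of M in p
  have hMp : HasDerivAt (fun q => Mf K N v T w X q)
      ((∑ n ∈ Finset.Icc 2 N, (n : ℝ) * T n * (((n - 1 : ℕ) : ℝ) * muf K v X p ^ (n - 1 - 1) * Dp p)) +
       ∑ n ∈ Finset.Icc 1 K,
         (0 * muf K v X p ^ n - w n X * ((n : ℝ) * muf K v X p ^ (n - 1) * Dp p)) /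
           (muf K v X p ^ n) ^ 2) p := by
    have h1 := HasDerivAt.fun_sum (fun n (_ : n ∈ Finset.Icc 2 N) =>
      ((hA.fun_pow (n - 1)).const_mul ((n : ℝ) * T n)))
    have h2 := HasDerivAt.fun_sum (fun n (_ : n ∈ Finset.Icc 1 K) =>
      (hasDerivAt_const p (w n X)).fun_div (hA.fun_pow n) (pow_ne_zero n hμ))
    have := ((hasDerivAt_const p X).fun_add h1).fun_add h2
    simp only [Mf]
    simpa using this
  -- derivative of M in X
  have hMX : HasDerivAt (fun x => Mf K N v T w x p)
      (1 + (∑ n ∈ Finset.Icc 2 N, (n : ℝ) * T n * (((n - 1 : ℕ) : ℝ) * muf K v X p ^ (n - 1 - 1) * DX p)) +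
       ∑ n ∈ Finset.Icc 1 K,
         (deriv (w n) X * muf K v X p ^ n - w n X * ((n : ℝ) * muf K v X p ^ (n - 1) * DX p)) /
           (muf K v X p ^ n) ^ 2) X := by
    have h1 := HasDerivAt.fun_sum (fun n (_ : n ∈ Finset.Icc 2 N) =>
      ((hB.fun_pow (n - 1)).const_mul ((n : ℝ) * T n)))
    have h2 := HasDerivAt.fun_sum (fun n (_ : n ∈ Finset.Icc 1 K) =>
      (hwd n X).hasDerivAt.fun_div (hB.fun_pow n) (pow_ne_zero n hμ))
    have := ((hasDerivAt_id X).fun_add h1).fun_add h2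
    simp only [Mf]
    simpa using this
  rw [hA.deriv, hB.deriv, hMp.deriv, hMX.deriv]
  -- algebraic simplification
  set m := muf K v X p with hm
  set S1X := ∑ n ∈ Finset.Icc 2 N, (n : ℝ) * T n * (((n - 1 : ℕ) : ℝ) * m ^ (n - 1 - 1) * DX p)
  set S1P := ∑ n ∈ Finset.Icc 2 N, (n : ℝ) * T n * (((n - 1 : ℕ) : ℝ) * m ^ (n - 1 - 1) * Dp p)
  have key1 : Dp p * S1X - DX p * S1P = 0 := by
    rw [Finset.mul_sum, Finset.mul_sum, ← Finset.sum_sub_distrib]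
    exact Finset.sum_eq_zero fun n _ => by ring
  have key2 : Dp p * (∑ n ∈ Finset.Icc 1 K,
        (deriv (w n) X * m ^ n - w n X * ((n : ℝ) * m ^ (n - 1) * DX p)) / (m ^ n) ^ 2) -
      DX p * (∑ n ∈ Finset.Icc 1 K,
        (0 * m ^ n - w n X * ((n : ℝ) * m ^ (n - 1) * Dp p)) / (m ^ n) ^ 2) =
      ∑ n ∈ Finset.Icc 1 K, Dp p * (deriv (w n) X / m ^ n) := by
    rw [Finset.mul_sum, Finset.mul_sum, ← Finset.sum_sub_distrib]
    refine Finset.sum_congr rfl fun n hn => ?_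
    obtain ⟨l, rfl⟩ : ∃ l, n = l + 1 := ⟨n - 1, by have := Finset.mem_Icc.mp hn; omega⟩
    simp only [Nat.add_sub_cancel]
    field_simp
    ring
  have key3 : Dp p * (1 + ∑ n ∈ Finset.Icc 1 K, deriv (w n) X / m ^ n) =
      Dp p + ∑ n ∈ Finset.Icc 1 K, Dp p * (deriv (w n) X / m ^ n) := by
    rw [mul_add, mul_one, Finset.mul_sum]
  linear_combination key3 - key1 - key2
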